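/- arXiv:1606.06256 — 2 statements merged into one kernel-verified Lean document; each statement's English description precedes it below -/
import Mathlib

section
/- If x⋆ is a critical point and γ ∈ (0, Γ(x⋆)), then T_γ(x⋆) = {x⋆}; that is, the forward-backward operator is single-valued at x⋆ with x⋆ as its only element. -/
open Set Filter Topology

/-- The majorizing model `ℓ_γ(z; x) = f(x) + ⟨∇f(x), z−x⟩ + ‖z−x‖²/(2γ) + g(z)`. -/
noncomputable def linQ {n : ℕ} (f : EuclideanSpace ℝ (Fin n) → ℝ)
    (f' : EuclideanSpace ℝ (Fin n) → EuclideanSpace ℝ (Fin n))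
    (g : EuclideanSpace ℝ (Fin n) → EReal) (γ : ℝ)
    (x z : EuclideanSpace ℝ (Fin n)) : EReal :=
  ((f x + (inner ℝ (f' x) (z - x) : ℝ) + ‖z - x‖ ^ 2 / (2 * γ) : ℝ) : EReal) + g z

/-- The forward-backward operator `T_γ(x)`: the set of minimizers of `z ↦ ℓ_γ(z; x)`. -/
noncomputable def Tset {n : ℕ} (f : EuclideanSpace ℝ (Fin n) → ℝ)
    (f' : EuclideanSpace ℝ (Fin n) → EuclideanSpace ℝ (Fin n))
    (g : EuclideanSpace ℝ (Fin n) → EReal) (γ : ℝ)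
    (x : EuclideanSpace ℝ (Fin n)) : Set (EuclideanSpace ℝ (Fin n)) :=
  {z | ∀ w, linQ f f' g γ x z ≤ linQ f f' g γ x w}

/-- The forward-backward envelope `φ_γ(x) = inf_z ℓ_γ(z; x)`. -/
noncomputable def fbe {n : ℕ} (f : EuclideanSpace ℝ (Fin n) → ℝ)
    (f' : EuclideanSpace ℝ (Fin n) → EuclideanSpace ℝ (Fin n))
    (g : EuclideanSpace ℝ (Fin n) → EReal) (γ : ℝ)
    (x : EuclideanSpace ℝ (Fin n)) : EReal :=
  ⨅ z, linQ f f' g γ x z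

/-- `g + ‖·‖²/(2γ)` is bounded below by a real constant. -/
def ProxBddBelow {n : ℕ} (g : EuclideanSpace ℝ (Fin n) → EReal) (γ : ℝ) : Prop :=
  ∃ c : ℝ, ∀ z, (c : EReal) ≤ g z + ((‖z‖ ^ 2 / (2 * γ) : ℝ) : EReal)

/-- `g` is proper: not identically `⊤`, and never `⊥`. -/
def ProperFn {n : ℕ} (g : EuclideanSpace ℝ (Fin n) → EReal) : Prop :=
  (∃ x, g x ≠ ⊤) ∧ ∀ x, g x ≠ ⊥

/-- The criticality threshold `Γ(x) = sup({γ > 0 : x ∈ T_γ(x)} ∪ {0})`. -/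
noncomputable def critThresh {n : ℕ} (f : EuclideanSpace ℝ (Fin n) → ℝ)
    (f' : EuclideanSpace ℝ (Fin n) → EuclideanSpace ℝ (Fin n))
    (g : EuclideanSpace ℝ (Fin n) → EReal)
    (x : EuclideanSpace ℝ (Fin n)) : ℝ :=
  sSup ({γ : ℝ | 0 < γ ∧ x ∈ Tset f f' g γ x} ∪ {0})

/-!
Passing from the step size `γ'` to a smaller `γ` adds the nonnegative term
`(1/(2γ) - 1/(2γ')) ‖z - x‖²` to the model `ℓ(z; x)` and leaves its value at `z = x` unchanged.
So if `x` minimizes the `γ'`-model, it also minimizes the `γ`-model, and any minimizer `z` of the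
`γ`-model undercuts the `γ'`-model at `x` by that term, which forces `z = x`. Every `γ < Γ(x)` lies
below such a `γ'` by the definition of `Γ` as a supremum.
-/

section ForwardBackward

variable {n : ℕ} {f : EuclideanSpace ℝ (Fin n) → ℝ}
  {f' : EuclideanSpace ℝ (Fin n) → EuclideanSpace ℝ (Fin n)}
  {g : EuclideanSpace ℝ (Fin n) → EReal}

lemma linQ_self (γ : ℝ) (x : EuclideanSpace ℝ (Fin n)) :
    linQ f f' g γ x x = (f x : EReal) + g x := by
  simp [linQ]

lemma linQ_eq_linQ_add (γ γ' : ℝ) (x z : EuclideanSpace ℝ (Fin n)) :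
    linQ f f' g γ x z =
      linQ f f' g γ' x z + ((1 / (2 * γ) - 1 / (2 * γ')) * ‖z - x‖ ^ 2 : ℝ) := by
  simp only [linQ]
  rw [add_right_comm _ (g z), ← EReal.coe_add]
  congr 2
  ring

lemma linQ_le_linQ_of_le {γ γ' : ℝ} (hγ : 0 < γ) (hγγ' : γ ≤ γ') (x z : EuclideanSpace ℝ (Fin n)) :
    linQ f f' g γ' x z ≤ linQ f f' g γ x z := by
  rw [linQ_eq_linQ_add γ γ']
  have hc : 0 ≤ 1 / (2 * γ) - 1 / (2 * γ') := sub_nonneg.mpr (by gcongr)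
  exact le_add_of_nonneg_right (EReal.coe_nonneg.mpr (mul_nonneg hc (sq_nonneg _)))

lemma mem_Tset_self_of_le {γ γ' : ℝ} (hγ : 0 < γ) (hγγ' : γ ≤ γ') {x : EuclideanSpace ℝ (Fin n)}
    (hx : x ∈ Tset f f' g γ' x) : x ∈ Tset f f' g γ x := fun w =>
  calc linQ f f' g γ x x = linQ f f' g γ' x x := by rw [linQ_self, linQ_self]
    _ ≤ linQ f f' g γ' x w := hx w
    _ ≤ linQ f f' g γ x w := linQ_le_linQ_of_le hγ hγγ' x w

lemma ProperFn.ne_top_of_mem_Tset_self (hg : ProperFn g) {γ : ℝ} {x : EuclideanSpace ℝ (Fin n)}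
    (hx : x ∈ Tset f f' g γ x) : g x ≠ ⊤ := by
  intro hgx
  obtain ⟨w, hw⟩ := hg.1
  have := hx w
  rw [linQ_self, hgx, EReal.coe_add_top, top_le_iff, linQ,
    ← EReal.coe_toReal hw (hg.2 w), ← EReal.coe_add] at this
  exact EReal.coe_ne_top _ this

lemma ProperFn.eq_of_mem_Tset {γ γ' : ℝ} (hg : ProperFn g) (hγ : 0 < γ) (hγγ' : γ < γ')
    {x z : EuclideanSpace ℝ (Fin n)} (hx : x ∈ Tset f f' g γ' x) (hz : z ∈ Tset f f' g γ x) :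
    z = x := by
  obtain ⟨G, hG⟩ : ∃ G : ℝ, g x = G :=
    ⟨(g x).toReal, (EReal.coe_toReal (hg.ne_top_of_mem_Tset_self hx) (hg.2 x)).symm⟩
  have hz' := hz x
  have hx' := hx z
  rw [linQ_eq_linQ_add γ γ', linQ_self, hG, ← EReal.coe_add] at hz'
  rw [linQ_self, hG, ← EReal.coe_add] at hx'
  set c := 1 / (2 * γ) - 1 / (2 * γ')
  have hc : 0 < c := by
    have : 1 / (2 * γ') < 1 / (2 * γ) := by gcongr
    linarith
  have hquad : c * ‖z - x‖ ^ 2 ≤ 0 := by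
    generalize linQ f f' g γ' x z = a at hx' hz'
    induction a using EReal.rec with
    | bot => exact absurd hx' (by simp)
    | top =>
      rw [EReal.top_add_coe, top_le_iff] at hz'
      exact absurd hz' (EReal.coe_ne_top _)
    | coe a =>
      rw [← EReal.coe_add, EReal.coe_le_coe_iff] at hz'
      rw [EReal.coe_le_coe_iff] at hx'
      linarith
  have : ‖z - x‖ ^ 2 ≤ 0 := nonpos_of_mul_nonpos_right hquad hc
  rw [← sub_eq_zero, ← norm_eq_zero]
  exact pow_eq_zero_iff two_ne_zero |>.mp (le_antisymm this (by positivity))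

lemma exists_mem_Tset_self_of_lt_critThresh {γ : ℝ} (hγ : 0 < γ) {x : EuclideanSpace ℝ (Fin n)}
    (hγΓ : γ < critThresh f f' g x) : ∃ γ', γ < γ' ∧ x ∈ Tset f f' g γ' x := by
  unfold critThresh at hγΓ
  obtain ⟨γ', hγ', hγγ'⟩ := exists_lt_of_lt_csSup (Set.singleton_nonempty 0).inr hγΓ
  rcases hγ' with ⟨-, hx⟩ | rfl
  · exact ⟨γ', hγγ', hx⟩
  · exact absurd hγ hγγ'.not_gt

end ForwardBackward

theorem stmt7_general {n : ℕ} (f : EuclideanSpace ℝ (Fin n) → ℝ)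
    (f' : EuclideanSpace ℝ (Fin n) → EuclideanSpace ℝ (Fin n))
    (g : EuclideanSpace ℝ (Fin n) → EReal)
    (hproper : ProperFn g)
    (xs : EuclideanSpace ℝ (Fin n))
    (γ : ℝ) (hγ : γ ∈ Set.Ioo (0 : ℝ) (critThresh f f' g xs)) :
    Tset f f' g γ xs = {xs} := by
  obtain ⟨γ', hγγ', hxs⟩ := exists_mem_Tset_self_of_lt_critThresh hγ.1 hγ.2
  exact Set.eq_singleton_iff_unique_mem.mpr
    ⟨mem_Tset_self_of_le hγ.1 hγγ'.le hxs,
      fun z hz => hproper.eq_of_mem_Tset hγ.1 hγγ' hxs hz⟩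

theorem stmt7 {n : ℕ} (f : EuclideanSpace ℝ (Fin n) → ℝ)
    (f' : EuclideanSpace ℝ (Fin n) → EuclideanSpace ℝ (Fin n))
    (hgrad : ∀ x, HasGradientAt f (f' x) x)
    (Lf : ℝ) (hlip : LipschitzWith (Real.toNNReal Lf) f')
    (g : EuclideanSpace ℝ (Fin n) → EReal)
    (hproper : ProperFn g) (hlsc : LowerSemicontinuous g)
    (γg : ℝ)
    (hpb : ∀ γ' ∈ Set.Ioo (0 : ℝ) γg, ProxBddBelow g γ')
    (hpb' : ∀ γ' : ℝ, γg < γ' → ¬ ProxBddBelow g γ')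
    (xs : EuclideanSpace ℝ (Fin n))
    (hcrit : ∃ γ' ∈ Set.Ioo (0 : ℝ) γg, xs ∈ Tset f f' g γ' xs)
    (γ : ℝ) (hγ : γ ∈ Set.Ioo (0 : ℝ) (critThresh f f' g xs)) :
    Tset f f' g γ xs = {xs} :=
  stmt7_general f f' g hproper xs γ hγ
end

section
/- (Linesearch well-definedness) Let γ ∈ (0, min{1/L_f, γ_g}), σ ∈ (0, γ(1−γL_f)/2), x ∈ ℝⁿ non-critical, x̄ ∈ T_γ(x) and d ∈ ℝⁿ. Then there exists τ̄ > 0 such that φ_γ(x̄ + τ d) ≤ φ_γ(x) − σ‖(x − x̄)/γ‖² for all τ ∈ [0, τ̄]. -/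
open Set Filter Topology

/-! Since `φ_γ(y) ≤ ℓ_γ(x̄; y)` for every `y`, it suffices to push `ℓ_γ(x̄; x̄ + τd)` below the
target. In `y ↦ ℓ_γ(x̄; y)` the function `g` only contributes the constant `g(x̄)`, so it suffices
to bound the real, continuous remainder (adding `g(x̄)` is monotone in `EReal`, whatever its value).
At `τ = 0`, `ℓ_γ(x̄; x̄) = f(x̄) + g(x̄)`, and the descent lemma gives
`f(x̄) + g(x̄) ≤ φ_γ(x) - (1 - γL_f)/(2γ) ‖x - x̄‖²`, which lies strictly below
`φ_γ(x) - σ‖(x - x̄)/γ‖²` because `x̄ ≠ x`. -/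

section Smooth

variable {E : Type*} [NormedAddCommGroup E] [InnerProductSpace ℝ E] {f : E → ℝ} {f' : E → E}

theorem LipschitzWith.le_add_inner_add_sq_of_hasGradientAt [CompleteSpace E] {K : NNReal}
    (hlip : LipschitzWith K f') (hgrad : ∀ x, HasGradientAt f (f' x) x) (x y : E) :
    f y ≤ f x + inner ℝ (f' x) (y - x) + K / 2 * ‖y - x‖ ^ 2 := by
  set u := y - x
  have hpath : ∀ t : ℝ, HasDerivAt (fun s : ℝ => f (x + s • u)) (inner ℝ (f' (x + t • u)) u) t :=
    fun t => by
      have h := (hgrad (x + t • u)).hasFDerivAt.comp_hasDerivAt t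
        (((hasDerivAt_id t).smul_const u).const_add x)
      simp only [InnerProductSpace.toDual_apply_apply, one_smul] at h
      exact h
  have hmodel : ∀ t : ℝ, HasDerivAt
      (fun s : ℝ => f x + s * inner ℝ (f' x) u + K / 2 * s ^ 2 * ‖u‖ ^ 2)
      (inner ℝ (f' x) u + K * t * ‖u‖ ^ 2) t := fun t => by
    have h := (((hasDerivAt_id t).mul_const (inner ℝ (f' x) u)).const_add (f x)).add
      (((hasDerivAt_pow 2 t).const_mul ((K : ℝ) / 2)).mul_const (‖u‖ ^ 2))
    exact h.congr_deriv (by push_cast; ring)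
  have hslope : ∀ t ∈ Ico (0 : ℝ) 1,
      inner ℝ (f' (x + t • u)) u ≤ inner ℝ (f' x) u + K * t * ‖u‖ ^ 2 := by
    rintro t ⟨ht, -⟩
    have hdist : ‖f' (x + t • u) - f' x‖ ≤ K * (t * ‖u‖) := by
      simpa [dist_eq_norm, norm_smul, abs_of_nonneg ht] using hlip.dist_le_mul (x + t • u) x
    have := real_inner_le_norm (f' (x + t • u) - f' x) u
    rw [inner_sub_left] at this
    nlinarith [norm_nonneg u]
  have key := image_le_of_deriv_right_le_deriv_boundary
    (fun t _ => (hpath t).continuousAt.continuousWithinAt)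
    (fun t _ => (hpath t).hasDerivWithinAt) (by simp)
    (fun t _ => (hmodel t).continuousAt.continuousWithinAt)
    (fun t _ => (hmodel t).hasDerivWithinAt) hslope (right_mem_Icc.2 zero_le_one)
  simpa [u] using key

noncomputable def quadModel (f : E → ℝ) (f' : E → E) (γ : ℝ) (x z : E) : ℝ :=
  f x + inner ℝ (f' x) (z - x) + ‖z - x‖ ^ 2 / (2 * γ)

@[simp]
theorem quadModel_self (γ : ℝ) (z : E) : quadModel f f' γ z z = f z := by
  simp [quadModel]

theorem continuous_quadModel_left (hf : Continuous f) (hf' : Continuous f') (γ : ℝ) (z : E) :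
    Continuous fun y => quadModel f f' γ y z := by
  unfold quadModel
  fun_prop

theorem add_mul_sq_lt_quadModel [CompleteSpace E] {K : NNReal} (hlip : LipschitzWith K f')
    (hgrad : ∀ x, HasGradientAt f (f' x) x) {γ σ : ℝ} (hγ : 0 < γ)
    (hσ : σ < γ * (1 - γ * K) / 2) {x z : E} (hzx : z ≠ x) :
    f z + σ * ‖γ⁻¹ • (x - z)‖ ^ 2 < quadModel f f' γ x z := by
  have hdesc := hlip.le_add_inner_add_sq_of_hasGradientAt hgrad x z
  have hpos : 0 < ‖z - x‖ ^ 2 := by positivity [sub_ne_zero.2 hzx]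
  have hscale : ‖γ⁻¹ • (x - z)‖ ^ 2 = γ⁻¹ ^ 2 * ‖z - x‖ ^ 2 := by
    rw [norm_smul, norm_inv, Real.norm_of_nonneg hγ.le, norm_sub_rev, mul_pow]
  have hcoeff : σ * γ⁻¹ ^ 2 < 1 / (2 * γ) - K / 2 := by
    have : 1 / (2 * γ) - K / 2 = γ * (1 - γ * K) / 2 * γ⁻¹ ^ 2 := by field_simp
    rw [this]
    gcongr
  have hquad : ‖z - x‖ ^ 2 / (2 * γ) = 1 / (2 * γ) * ‖z - x‖ ^ 2 := by ring
  rw [quadModel, hscale, hquad]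
  linarith [mul_lt_mul_of_pos_right hcoeff hpos]

end Smooth

section Envelope

variable {n : ℕ} {f : EuclideanSpace ℝ (Fin n) → ℝ}
  {f' : EuclideanSpace ℝ (Fin n) → EuclideanSpace ℝ (Fin n)}
  {g : EuclideanSpace ℝ (Fin n) → EReal} {γ : ℝ}

theorem linQ_eq_quadModel_add (x z : EuclideanSpace ℝ (Fin n)) :
    linQ f f' g γ x z = (quadModel f f' γ x z : EReal) + g z :=
  rfl

theorem fbe_le_quadModel_add (x z : EuclideanSpace ℝ (Fin n)) :
    fbe f f' g γ x ≤ (quadModel f f' γ x z : EReal) + g z :=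
  iInf_le _ z

theorem fbe_eq_linQ_of_mem_Tset {x z : EuclideanSpace ℝ (Fin n)} (hz : z ∈ Tset f f' g γ x) :
    fbe f f' g γ x = linQ f f' g γ x z :=
  le_antisymm (iInf_le _ z) (le_iInf hz)

end Envelope

theorem stmt17_general {n : ℕ} (f : EuclideanSpace ℝ (Fin n) → ℝ)
    (f' : EuclideanSpace ℝ (Fin n) → EuclideanSpace ℝ (Fin n))
    (hgrad : ∀ x, HasGradientAt f (f' x) x)
    (Lf : ℝ) (hLf : 0 < Lf) (hlip : LipschitzWith (Real.toNNReal Lf) f')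
    (g : EuclideanSpace ℝ (Fin n) → EReal)
    (γg : ℝ)
    (γ : ℝ) (hγ : γ ∈ Set.Ioo (0 : ℝ) (min (1 / Lf) γg))
    (σ : ℝ) (hσ : σ ∈ Set.Ioo (0 : ℝ) (γ * (1 - γ * Lf) / 2))
    (x xb : EuclideanSpace ℝ (Fin n)) (hxb : xb ∈ Tset f f' g γ x)
    (hnoncrit : xb ≠ x) (d : EuclideanSpace ℝ (Fin n)) :
    ∃ τb : ℝ, 0 < τb ∧ ∀ τ ∈ Set.Icc (0 : ℝ) τb,
      fbe f f' g γ (xb + τ • d) ≤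
        fbe f f' g γ x - ((σ * ‖γ⁻¹ • (x - xb)‖ ^ 2 : ℝ) : EReal) := by
  set c := quadModel f f' γ x xb - σ * ‖γ⁻¹ • (x - xb)‖ ^ 2
  have hdecrease : quadModel f f' γ xb xb < c := by
    have hσ' : σ < γ * (1 - γ * Lf.toNNReal) / 2 := by
      rw [Real.coe_toNNReal _ hLf.le]
      exact hσ.2
    have := add_mul_sq_lt_quadModel hlip hgrad hγ.1 hσ' hnoncrit
    rw [quadModel_self]
    linarith
  have hcont : ContinuousAt (fun τ : ℝ => quadModel f f' γ (xb + τ • d) xb) 0 :=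
    ((continuous_quadModel_left (continuous_iff_continuousAt.2 fun y => (hgrad y).continuousAt)
      hlip.continuous γ xb).comp (by fun_prop)).continuousAt
  have hnear : ∀ᶠ τ in 𝓝[≥] (0 : ℝ), quadModel f f' γ (xb + τ • d) xb ≤ c :=
    nhdsWithin_le_nhds <| (hcont.eventually_lt continuousAt_const (by simpa using hdecrease)).mono
      fun _ => le_of_lt
  obtain ⟨τb, hτb, hIcc⟩ := mem_nhdsGE_iff_exists_Icc_subset.1 hnear
  refine ⟨τb, hτb, fun τ hτ => ?_⟩
  calc fbe f f' g γ (xb + τ • d)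
      ≤ (quadModel f f' γ (xb + τ • d) xb : EReal) + g xb := fbe_le_quadModel_add _ _
    _ ≤ (c : EReal) + g xb := by gcongr; exact_mod_cast hIcc hτ
    _ = fbe f f' g γ x - ((σ * ‖γ⁻¹ • (x - xb)‖ ^ 2 : ℝ) : EReal) := by
      rw [fbe_eq_linQ_of_mem_Tset hxb, linQ_eq_quadModel_add, EReal.coe_sub]
      simp only [sub_eq_add_neg]
      exact add_right_comm _ _ _

theorem stmt17 {n : ℕ} (f : EuclideanSpace ℝ (Fin n) → ℝ)
    (f' : EuclideanSpace ℝ (Fin n) → EuclideanSpace ℝ (Fin n))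
    (hgrad : ∀ x, HasGradientAt f (f' x) x)
    (Lf : ℝ) (hLf : 0 < Lf) (hlip : LipschitzWith (Real.toNNReal Lf) f')
    (g : EuclideanSpace ℝ (Fin n) → EReal)
    (hproper : ProperFn g) (hlsc : LowerSemicontinuous g)
    (γg : ℝ) (hpb : ∀ γ' ∈ Set.Ioo (0 : ℝ) γg, ProxBddBelow g γ')
    (γ : ℝ) (hγ : γ ∈ Set.Ioo (0 : ℝ) (min (1 / Lf) γg))
    (σ : ℝ) (hσ : σ ∈ Set.Ioo (0 : ℝ) (γ * (1 - γ * Lf) / 2))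
    (x xb : EuclideanSpace ℝ (Fin n)) (hxb : xb ∈ Tset f f' g γ x)
    (hnoncrit : xb ≠ x) (d : EuclideanSpace ℝ (Fin n)) :
    ∃ τb : ℝ, 0 < τb ∧ ∀ τ ∈ Set.Icc (0 : ℝ) τb,
      fbe f f' g γ (xb + τ • d) ≤
        fbe f f' g γ x - ((σ * ‖γ⁻¹ • (x - xb)‖ ^ 2 : ℝ) : EReal) :=
  stmt17_general f f' hgrad Lf hLf hlip g γg γ hγ σ hσ x xb hxb hnoncrit d
end
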